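/- arXiv:2604.08155 — 4 statements merged into one kernel-verified Lean document; each statement's English description precedes it below -/
import Mathlib

section
/- Fix T > 0, d ∈ ℕ, x₀ ∈ ℝ^d, a nonempty set U, continuous functions b̃ : [0,T]×ℝ^d×U → ℝ^d and r̃ : [0,T]×ℝ^d×U → ℝ, a terminal cost g : ℝ^d → ℝ with convex conjugate g*(p) = sup_{x∈ℝ^d}(⟨x,p⟩ − g(x)) ∈ ℝ∪{+∞}, and the reduced Hamiltonian 𝓗(t,x,p) = inf_{u∈U} { ⟨p, b̃(t,x,u)⟩ + r̃(t,x,u) }, assumed finite for all (t,x,p). Let (y, u) be an admissible pair: u : [0,T] → U measurable, y : [0,T] → ℝ^d continuously differentiable with y'(t) = b̃(t, y(t), u(t)) for all t ∈ [0,T] and y(0) = x₀, with t ↦ r̃(t, y(t), u(t)) integrable on [0,T]. Let p : [0,T] → ℝ^d be any continuously differentiable function such that g*(p(T)) < +∞ and t ↦ 𝓗(t, y(t), p(t)) is integrable on [0,T]. Then ∫₀ᵀ r̃(t, y(t), u(t)) dt + g(y(T)) ≥ ⟨x₀, p(0)⟩ − g*(p(T)) + ∫₀ᵀ [ 𝓗(t,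 y(t), p(t)) + ⟨y(t), p'(t)⟩ ] dt. -/
open RealInnerProductSpace MeasureTheory

/-- Weak duality: for any admissible pair `(y, u)` and any C¹ costate `p` with
`g*(p(T)) < ∞`, the cost of `(y, u)` dominates the Hopf dual functional evaluated at `p`. -/
theorem stmt_3 {d : ℕ} {U : Type*} [TopologicalSpace U] [MeasurableSpace U] [BorelSpace U]
    [Nonempty U]
    (T : ℝ) (hT : 0 < T) (x₀ : EuclideanSpace ℝ (Fin d))
    (btilde : ℝ → EuclideanSpace ℝ (Fin d) → U → EuclideanSpace ℝ (Fin d))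
    (rtilde : ℝ → EuclideanSpace ℝ (Fin d) → U → ℝ)
    (hbc : ContinuousOn
      (fun q : ℝ × EuclideanSpace ℝ (Fin d) × U => btilde q.1 q.2.1 q.2.2)
      (Set.Icc 0 T ×ˢ (Set.univ : Set (EuclideanSpace ℝ (Fin d) × U))))
    (hrc : ContinuousOn
      (fun q : ℝ × EuclideanSpace ℝ (Fin d) × U => rtilde q.1 q.2.1 q.2.2)
      (Set.Icc 0 T ×ˢ (Set.univ : Set (EuclideanSpace ℝ (Fin d) × U))))
    (g : EuclideanSpace ℝ (Fin d) → ℝ)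
    (Hred : ℝ → EuclideanSpace ℝ (Fin d) → EuclideanSpace ℝ (Fin d) → ℝ)
    (hHred : ∀ t x p, Hred t x p = ⨅ u : U, (⟪p, btilde t x u⟫ + rtilde t x u))
    (hfin : ∀ t x p, BddBelow (Set.range fun u : U => ⟪p, btilde t x u⟫ + rtilde t x u))
    -- the admissible pair (y, u)
    (u : ℝ → U) (humeas : Measurable u)
    (y : ℝ → EuclideanSpace ℝ (Fin d))
    (hy : ∀ t ∈ Set.Icc 0 T, HasDerivAt y (btilde t (y t) (u t)) t)
    (hyC1 : ContinuousOn (fun t => btilde t (y t) (u t)) (Set.Icc 0 T))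
    (hy0 : y 0 = x₀)
    (hrint : IntervalIntegrable (fun t => rtilde t (y t) (u t)) volume 0 T)
    -- the C¹ costate p with derivative p'
    (p p' : ℝ → EuclideanSpace ℝ (Fin d))
    (hp : ∀ t ∈ Set.Icc 0 T, HasDerivAt p (p' t) t)
    (hp'c : ContinuousOn p' (Set.Icc 0 T))
    -- g*(p(T)) < +∞
    (hgstar : BddAbove (Set.range fun x : EuclideanSpace ℝ (Fin d) => ⟪x, p T⟫ - g x))
    -- t ↦ 𝓗(t, y(t), p(t)) is integrable on [0, T]
    (hHint : IntervalIntegrable (fun t => Hred t (y t) (p t)) volume 0 T) :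
    (∫ t in (0:ℝ)..T, rtilde t (y t) (u t)) + g (y T) ≥
      ⟪x₀, p 0⟫ - (⨆ x : EuclideanSpace ℝ (Fin d), (⟪x, p T⟫ - g x)) +
        ∫ t in (0:ℝ)..T, (Hred t (y t) (p t) + ⟪y t, p' t⟫) := by
  have hIcc : Set.uIcc (0:ℝ) T = Set.Icc 0 T := Set.uIcc_of_le hT.le
  have hycont : ContinuousOn y (Set.Icc 0 T) :=
    fun t ht => (hy t ht).continuousAt.continuousWithinAt
  have hpcont : ContinuousOn p (Set.Icc 0 T) :=
    fun t ht => (hp t ht).continuousAt.continuousWithinAt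
  -- derivative of the pairing
  have hderiv : ∀ t ∈ Set.Icc (0:ℝ) T,
      HasDerivAt (fun s => (⟪y s, p s⟫ : ℝ))
        (⟪p t, btilde t (y t) (u t)⟫ + ⟪y t, p' t⟫) t := by
    intro t ht
    have h := HasDerivAt.inner ℝ (hy t ht) (hp t ht)
    have : (⟪y t, p' t⟫ : ℝ) + ⟪btilde t (y t) (u t), p t⟫
        = ⟪p t, btilde t (y t) (u t)⟫ + ⟪y t, p' t⟫ := by
      rw [real_inner_comm (btilde t (y t) (u t)) (p t)]; ring
    rwa [this] at h
  have hdcont : ContinuousOn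
      (fun t => (⟪p t, btilde t (y t) (u t)⟫ : ℝ) + ⟪y t, p' t⟫) (Set.Icc 0 T) :=
    (hpcont.inner hyC1).add (hycont.inner hp'c)
  have hdint : IntervalIntegrable
      (fun t => (⟪p t, btilde t (y t) (u t)⟫ : ℝ) + ⟪y t, p' t⟫) volume 0 T :=
    (hdcont.mono hIcc.subset).intervalIntegrable
  have hFTC : (∫ t in (0:ℝ)..T, ((⟪p t, btilde t (y t) (u t)⟫ : ℝ) + ⟪y t, p' t⟫))
      = ⟪y T, p T⟫ - ⟪y 0, p 0⟫ := by
    apply intervalIntegral.integral_eq_sub_of_hasDerivAt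
    · intro t ht; exact hderiv t (hIcc ▸ ht)
    · exact hdint
  have hy'int : IntervalIntegrable (fun t => (⟪y t, p' t⟫ : ℝ)) volume 0 T :=
    ((hycont.inner hp'c).mono hIcc.subset).intervalIntegrable
  -- pointwise bound
  have hmono : (∫ t in (0:ℝ)..T, (Hred t (y t) (p t) + ⟪y t, p' t⟫))
      ≤ ∫ t in (0:ℝ)..T,
        (((⟪p t, btilde t (y t) (u t)⟫ : ℝ) + ⟪y t, p' t⟫) + rtilde t (y t) (u t)) := by
    apply intervalIntegral.integral_mono_on hT.le (hHint.add hy'int) (hdint.add hrint)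
    intro t ht
    have hle : Hred t (y t) (p t) ≤ ⟪p t, btilde t (y t) (u t)⟫ + rtilde t (y t) (u t) := by
      rw [hHred]; exact ciInf_le (hfin t (y t) (p t)) (u t)
    linarith
  have hsplit : (∫ t in (0:ℝ)..T,
        (((⟪p t, btilde t (y t) (u t)⟫ : ℝ) + ⟪y t, p' t⟫) + rtilde t (y t) (u t)))
      = (⟪y T, p T⟫ - ⟪y 0, p 0⟫) + ∫ t in (0:ℝ)..T, rtilde t (y t) (u t) := by
    rw [intervalIntegral.integral_add hdint hrint, hFTC]
  have hS : (⟪y T, p T⟫ : ℝ) - g (y T)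
      ≤ ⨆ x : EuclideanSpace ℝ (Fin d), (⟪x, p T⟫ - g x) := le_ciSup hgstar (y T)
  rw [hy0] at hFTC hsplit
  rw [hsplit] at hmono
  linarith
end

section
/- Fix T > 0, d ∈ ℕ, x₀ ∈ ℝ^d, a nonempty set U, continuous functions b̃ : [0,T]×ℝ^d×U → ℝ^d and r̃ : [0,T]×ℝ^d×U → ℝ, the Hamiltonian H(t,x,u,p) = ⟨p, b̃(t,x,u)⟩ + r̃(t,x,u), and the reduced Hamiltonian 𝓗(t,x,p) = inf_{u∈U} H(t,x,u,p), assumed finite for all (t,x,p). Let g : ℝ^d → ℝ be convex and continuously differentiable, with convex conjugate g*(p) = sup_{x∈ℝ^d}(⟨x,p⟩ − g(x)). Suppose (x*, u*) is an admissible pair (u* : [0,T] → U measurable, x* ∈ C¹ with (x*)'(t) = b̃(t, x*(t), u*(t)), x*(0) = x₀, t ↦ r̃(t, x*(t), u*(t)) integrable), and p* : [0,T] → ℝ^d is continuously differentiable with p*(T) = ∇g(x*(T)) and H(t, x*(t), u*(t), p*(t)) = 𝓗(t, x*(t), p*(t)) for all t ∈ [0,T], and t ↦ 𝓗(t, x*(t),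 p*(t)) is integrable. Then g*(p*(T)) < +∞ and ⟨x₀, p*(0)⟩ − g*(p*(T)) + ∫₀ᵀ [ 𝓗(t, x*(t), p*(t)) + ⟨x*(t), (p*)'(t)⟩ ] dt = ∫₀ᵀ r̃(t, x*(t), u*(t)) dt + g(x*(T)). -/
open RealInnerProductSpace MeasureTheory

lemma grad_ineq_aux {d : ℕ} (g : EuclideanSpace ℝ (Fin d) → ℝ)
    (hgconv : ConvexOn ℝ Set.univ g) {x p : EuclideanSpace ℝ (Fin d)}
    (hp : HasGradientAt g p x) (y : EuclideanSpace ℝ (Fin d)) :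
    ⟪p, y - x⟫ ≤ g y - g x := by
  set L : ℝ → EuclideanSpace ℝ (Fin d) := fun t => x + t • (y - x) with hL
  have hline : HasDerivAt L (y - x) (0 : ℝ) := by
    simpa [hL] using ((hasDerivAt_id (0 : ℝ)).smul_const (y - x)).const_add x
  have hL0 : L 0 = x := by simp [hL]
  have hφ : HasDerivAt (fun t : ℝ => g (L t)) ⟪p, y - x⟫ 0 := by
    have hf : HasFDerivAt g (InnerProductSpace.toDual ℝ _ p) (L 0) := by
      rw [hL0]; exact hp.hasFDerivAt
    have h := hf.comp_hasDerivAt 0 hline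
    simp at h
    exact h
  have hφc : ConvexOn ℝ Set.univ (fun t : ℝ => g (L t)) := by
    have := hgconv.comp_affineMap (AffineMap.lineMap x y : ℝ →ᵃ[ℝ] EuclideanSpace ℝ (Fin d))
    have heq : (fun t : ℝ => g (L t)) = g ∘ (AffineMap.lineMap x y : ℝ →ᵃ[ℝ] _) := by
      funext t
      simp [hL, AffineMap.lineMap_apply, add_comm]
    rw [heq]
    simpa using this
  have := hφc.le_slope_of_hasDerivAt (Set.mem_univ (0:ℝ)) (Set.mem_univ (1:ℝ)) one_pos hφ
  simpa [slope_def_field, hL0, hL] using this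

/-- At a Pontryagin extremal `(x*, u*, p*)` with transversality `p*(T) = ∇g(x*(T))` and
pointwise Hamiltonian minimization, the Hopf dual functional equals the cost; in
particular `g*(p*(T)) < ∞`. -/
theorem stmt_4 {d : ℕ} {U : Type*} [TopologicalSpace U] [MeasurableSpace U] [BorelSpace U]
    [Nonempty U]
    (T : ℝ) (hT : 0 < T) (x₀ : EuclideanSpace ℝ (Fin d))
    (btilde : ℝ → EuclideanSpace ℝ (Fin d) → U → EuclideanSpace ℝ (Fin d))
    (rtilde : ℝ → EuclideanSpace ℝ (Fin d) → U → ℝ)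
    (hbc : ContinuousOn
      (fun q : ℝ × EuclideanSpace ℝ (Fin d) × U => btilde q.1 q.2.1 q.2.2)
      (Set.Icc 0 T ×ˢ (Set.univ : Set (EuclideanSpace ℝ (Fin d) × U))))
    (hrc : ContinuousOn
      (fun q : ℝ × EuclideanSpace ℝ (Fin d) × U => rtilde q.1 q.2.1 q.2.2)
      (Set.Icc 0 T ×ˢ (Set.univ : Set (EuclideanSpace ℝ (Fin d) × U))))
    (Hred : ℝ → EuclideanSpace ℝ (Fin d) → EuclideanSpace ℝ (Fin d) → ℝ)
    (hHred : ∀ t x p, Hred t x p = ⨅ u : U, (⟪p, btilde t x u⟫ + rtilde t x u))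
    (hfin : ∀ t x p, BddBelow (Set.range fun u : U => ⟪p, btilde t x u⟫ + rtilde t x u))
    -- the terminal cost: convex and continuously differentiable
    (g : EuclideanSpace ℝ (Fin d) → ℝ) (hgconv : ConvexOn ℝ Set.univ g)
    (g' : EuclideanSpace ℝ (Fin d) → EuclideanSpace ℝ (Fin d))
    (hg' : ∀ x, HasGradientAt g (g' x) x) (hg'c : Continuous g')
    -- the admissible pair (x*, u*)
    (ustar : ℝ → U) (humeas : Measurable ustar)
    (xstar : ℝ → EuclideanSpace ℝ (Fin d))
    (hx : ∀ t ∈ Set.Icc 0 T, HasDerivAt xstar (btilde t (xstar t) (ustar t)) t)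
    (hxC1 : ContinuousOn (fun t => btilde t (xstar t) (ustar t)) (Set.Icc 0 T))
    (hx0 : xstar 0 = x₀)
    (hrint : IntervalIntegrable (fun t => rtilde t (xstar t) (ustar t)) volume 0 T)
    -- the C¹ costate p* with derivative p*'
    (pstar pstar' : ℝ → EuclideanSpace ℝ (Fin d))
    (hp : ∀ t ∈ Set.Icc 0 T, HasDerivAt pstar (pstar' t) t)
    (hp'c : ContinuousOn pstar' (Set.Icc 0 T))
    -- transversality
    (htrans : pstar T = g' (xstar T))
    -- pointwise Hamiltonian minimization: H(t, x*, u*, p*) = 𝓗(t, x*, p*)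
    (hmin : ∀ t ∈ Set.Icc 0 T,
      ⟪pstar t, btilde t (xstar t) (ustar t)⟫ + rtilde t (xstar t) (ustar t) =
        Hred t (xstar t) (pstar t))
    -- t ↦ 𝓗(t, x*(t), p*(t)) is integrable
    (hHint : IntervalIntegrable (fun t => Hred t (xstar t) (pstar t)) volume 0 T) :
    BddAbove (Set.range fun x : EuclideanSpace ℝ (Fin d) => ⟪x, pstar T⟫ - g x) ∧
    ⟪x₀, pstar 0⟫ - (⨆ x : EuclideanSpace ℝ (Fin d), (⟪x, pstar T⟫ - g x)) +
        (∫ t in (0:ℝ)..T, (Hred t (xstar t) (pstar t) + ⟪xstar t, pstar' t⟫)) =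
      (∫ t in (0:ℝ)..T, rtilde t (xstar t) (ustar t)) + g (xstar T) := by
  -- Fenchel–Young: the supremum is attained at xstar T
  have hub : ∀ z : EuclideanSpace ℝ (Fin d),
      ⟪z, pstar T⟫ - g z ≤ ⟪xstar T, pstar T⟫ - g (xstar T) := by
    intro z
    have h := grad_ineq_aux g hgconv (htrans ▸ hg' (xstar T)) z
    have h2 : ⟪pstar T, z - xstar T⟫ = ⟪z, pstar T⟫ - ⟪xstar T, pstar T⟫ := by
      rw [inner_sub_right]
      rw [real_inner_comm (pstar T) z, real_inner_comm (pstar T) (xstar T)]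
    linarith [h, h2.symm.le]
  have hbdd : BddAbove (Set.range fun x : EuclideanSpace ℝ (Fin d) => ⟪x, pstar T⟫ - g x) :=
    ⟨⟪xstar T, pstar T⟫ - g (xstar T), by rintro _ ⟨z, rfl⟩; exact hub z⟩
  have hsup : (⨆ x : EuclideanSpace ℝ (Fin d), (⟪x, pstar T⟫ - g x)) =
      ⟪xstar T, pstar T⟫ - g (xstar T) := by
    apply le_antisymm (ciSup_le hub)
    exact le_ciSup hbdd (xstar T)
  refine ⟨hbdd, ?_⟩
  -- continuity facts
  have hIcc : Set.uIcc (0:ℝ) T = Set.Icc 0 T := Set.uIcc_of_le hT.le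
  have hxc : ContinuousOn xstar (Set.Icc 0 T) := fun t ht =>
    ((hx t ht).continuousAt).continuousWithinAt
  have hpc : ContinuousOn pstar (Set.Icc 0 T) := fun t ht =>
    ((hp t ht).continuousAt).continuousWithinAt
  -- derivative of t ↦ ⟪xstar t, pstar t⟫
  set F' : ℝ → ℝ := fun t => ⟪xstar t, pstar' t⟫ + ⟪btilde t (xstar t) (ustar t), pstar t⟫
    with hF'
  have hFderiv : ∀ t ∈ Set.uIcc (0:ℝ) T,
      HasDerivAt (fun t => ⟪xstar t, pstar t⟫) (F' t) t := by
    intro t ht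
    rw [hIcc] at ht
    exact (hx t ht).inner ℝ (hp t ht)
  have hF'c : ContinuousOn F' (Set.Icc 0 T) :=
    (hxc.inner hp'c).add (hxC1.inner hpc)
  have hF'int : IntervalIntegrable F' volume 0 T := by
    apply ContinuousOn.intervalIntegrable
    rwa [hIcc]
  have hFTC : (∫ t in (0:ℝ)..T, F' t) = ⟪xstar T, pstar T⟫ - ⟪xstar 0, pstar 0⟫ :=
    intervalIntegral.integral_eq_sub_of_hasDerivAt hFderiv hF'int
  -- rewrite the integrand
  have hcongr : (∫ t in (0:ℝ)..T, (Hred t (xstar t) (pstar t) + ⟪xstar t, pstar' t⟫)) =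
      (∫ t in (0:ℝ)..T, (F' t + rtilde t (xstar t) (ustar t))) := by
    apply intervalIntegral.integral_congr
    intro t ht
    rw [hIcc] at ht
    have := hmin t ht
    simp only [hF']
    rw [← this, real_inner_comm (pstar t) (btilde t (xstar t) (ustar t))]
    ring
  have hsplit : (∫ t in (0:ℝ)..T, (F' t + rtilde t (xstar t) (ustar t))) =
      (∫ t in (0:ℝ)..T, F' t) + (∫ t in (0:ℝ)..T, rtilde t (xstar t) (ustar t)) :=
    intervalIntegral.integral_add hF'int hrint
  rw [hsup, hcongr, hsplit, hFTC, hx0]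
  ring
end

section
/- Fix T > 0, d ∈ ℕ, x₀ ∈ ℝ^d, a nonempty set U, continuous functions b̃ : [0,T]×ℝ^d×U → ℝ^d and r̃ : [0,T]×ℝ^d×U → ℝ, the Hamiltonian H(t,x,u,p) = ⟨p, b̃(t,x,u)⟩ + r̃(t,x,u), and the reduced Hamiltonian 𝓗(t,x,p) = inf_{u∈U} H(t,x,u,p), assumed finite for all (t,x,p). Let g : ℝ^d → ℝ be convex and continuously differentiable, with convex conjugate g*(p) = sup_{x∈ℝ^d}(⟨x,p⟩ − g(x)). Suppose (x*, u*) is an admissible pair (u* measurable into U, x* ∈ C¹ with (x*)'(t) = b̃(t, x*(t), u*(t)), x*(0) = x₀, t ↦ r̃(t, x*(t), u*(t)) integrable), and p* : [0,T] → ℝ^d is continuously differentiable with p*(T) = ∇g(x*(T)), H(t, x*(t), u*(t), p*(t)) = 𝓗(t, x*(t), p*(t)) for all t, and t ↦ 𝓗(t, x*(t), p*(t)) integrable. Then the cost of (x*, u*) admits the dual representation ∫₀ᵀ r̃(t, x*(t), u*(t)) dt + g(x*(T)) = sup { ⟨x₀, p(0)⟩ − g*(p(T)) + ∫₀ᵀ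 [ 𝓗(t, x*(t), p(t)) + ⟨x*(t), p'(t)⟩ ] dt }, where the supremum ranges over all continuously differentiable p : [0,T] → ℝ^d with g*(p(T)) < +∞ and t ↦ 𝓗(t, x*(t), p(t)) integrable, and the supremum is attained at p = p*. -/
open RealInnerProductSpace MeasureTheory

lemma grad_ineq_aux_s5 {E : Type*} [NormedAddCommGroup E] [InnerProductSpace ℝ E] [CompleteSpace E]
    {g : E → ℝ} (hgconv : ConvexOn ℝ Set.univ g)
    {xb p : E} (hg : HasGradientAt g p xb) (x : E) :
    ⟪x, p⟫ - g x ≤ ⟪xb, p⟫ - g xb := by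
  set v := x - xb with hv
  set φ : ℝ → ℝ := fun t => g (t • v + xb) with hφ
  have hconv : ConvexOn ℝ Set.univ φ := by
    refine ⟨convex_univ, fun s _ t _ a b ha hb hab => ?_⟩
    have h1 : (a * s + b * t) • v + xb = a • (s • v + xb) + b • (t • v + xb) := by
      have h2 : a • (s • v + xb) + b • (t • v + xb) = (a * s + b * t) • v + (a + b) • xb := by
        module
      rw [h2, hab, one_smul]
    calc φ (a • s + b • t) = g (a • (s • v + xb) + b • (t • v + xb)) := by
          simp only [hφ, smul_eq_mul]; rw [h1]
      _ ≤ a * g (s • v + xb) + b * g (t • v + xb) :=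
          hgconv.2 (Set.mem_univ _) (Set.mem_univ _) ha hb hab
      _ = a • φ s + b • φ t := rfl
  have hc : HasDerivAt (fun t : ℝ => t • v + xb) v 0 := by
    simpa using ((hasDerivAt_id (0:ℝ)).smul_const v).add_const xb
  have hd : HasDerivAt φ ⟪p, v⟫ 0 := by
    have hg2 : HasFDerivAt g ((InnerProductSpace.toDual ℝ E) p) ((0:ℝ) • v + xb) := by
      simpa using hg.hasFDerivAt
    have := hg2.comp_hasDerivAt 0 hc
    exact (by simpa using this : HasDerivAt (g ∘ fun t : ℝ => t • v + xb) ⟪p, v⟫ 0)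
  have hslope := hconv.le_slope_of_hasDerivAt (Set.mem_univ (0:ℝ)) (Set.mem_univ (1:ℝ))
    one_pos hd
  rw [slope_def_field] at hslope
  have hφ1 : φ 1 = g x := by simp [hφ, hv]
  have hφ0 : φ 0 = g xb := by simp [hφ]
  have hiv : ⟪p, v⟫ = ⟪x, p⟫ - ⟪xb, p⟫ := by
    rw [hv, inner_sub_right, real_inner_comm p x, real_inner_comm p xb]
  rw [hφ1, hφ0, hiv] at hslope
  have h3 : (g x - g xb) / (1 - 0) = g x - g xb := by norm_num
  rw [h3] at hslope
  linarith

/-- FTC for the inner product ⟪xstar, p⟫ on [0,T]. -/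
lemma ftc_inner_aux {d : ℕ} {T : ℝ} (hT : 0 ≤ T)
    (xstar b p p' : ℝ → EuclideanSpace ℝ (Fin d))
    (hx : ∀ t ∈ Set.Icc 0 T, HasDerivAt xstar (b t) t)
    (hbC : ContinuousOn b (Set.Icc 0 T))
    (hp : ∀ t ∈ Set.Icc 0 T, HasDerivAt p (p' t) t)
    (hp'c : ContinuousOn p' (Set.Icc 0 T)) :
    ∫ t in (0:ℝ)..T, (⟪xstar t, p' t⟫ + ⟪b t, p t⟫) =
      ⟪xstar T, p T⟫ - ⟪xstar 0, p 0⟫ := by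
  have huIcc : Set.uIcc (0:ℝ) T = Set.Icc 0 T := Set.uIcc_of_le hT
  have hxc : ContinuousOn xstar (Set.Icc 0 T) :=
    fun t ht => (hx t ht).continuousAt.continuousWithinAt
  have hpc : ContinuousOn p (Set.Icc 0 T) :=
    fun t ht => (hp t ht).continuousAt.continuousWithinAt
  have hderiv : ∀ t ∈ Set.uIcc (0:ℝ) T,
      HasDerivAt (fun t => ⟪xstar t, p t⟫) (⟪xstar t, p' t⟫ + ⟪b t, p t⟫) t := by
    intro t ht
    rw [huIcc] at ht
    exact (hx t ht).inner ℝ (hp t ht)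
  have hint : IntervalIntegrable (fun t => ⟪xstar t, p' t⟫ + ⟪b t, p t⟫) volume 0 T := by
    apply ContinuousOn.intervalIntegrable
    rw [huIcc]
    exact (hxc.inner hp'c).add (hbC.inner hpc)
  exact intervalIntegral.integral_eq_sub_of_hasDerivAt hderiv hint

/-- Hopf-type dual representation of the cost of a Pontryagin extremal pair `(x*, u*)`:
the cost is the supremum, over all C¹ costates `p` with `g*(p(T)) < ∞` and integrable
reduced Hamiltonian along `x*`, of the dual functional, and the supremum is attained at
the Pontryagin costate `p*`. -/
theorem stmt_5 {d : ℕ} {U : Type*} [TopologicalSpace U] [MeasurableSpace U] [BorelSpace U]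
    [Nonempty U]
    (T : ℝ) (hT : 0 < T) (x₀ : EuclideanSpace ℝ (Fin d))
    (btilde : ℝ → EuclideanSpace ℝ (Fin d) → U → EuclideanSpace ℝ (Fin d))
    (rtilde : ℝ → EuclideanSpace ℝ (Fin d) → U → ℝ)
    (hbc : ContinuousOn
      (fun q : ℝ × EuclideanSpace ℝ (Fin d) × U => btilde q.1 q.2.1 q.2.2)
      (Set.Icc 0 T ×ˢ (Set.univ : Set (EuclideanSpace ℝ (Fin d) × U))))
    (hrc : ContinuousOn
      (fun q : ℝ × EuclideanSpace ℝ (Fin d) × U => rtilde q.1 q.2.1 q.2.2)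
      (Set.Icc 0 T ×ˢ (Set.univ : Set (EuclideanSpace ℝ (Fin d) × U))))
    (Hred : ℝ → EuclideanSpace ℝ (Fin d) → EuclideanSpace ℝ (Fin d) → ℝ)
    (hHred : ∀ t x p, Hred t x p = ⨅ u : U, (⟪p, btilde t x u⟫ + rtilde t x u))
    (hfin : ∀ t x p, BddBelow (Set.range fun u : U => ⟪p, btilde t x u⟫ + rtilde t x u))
    -- the terminal cost: convex and continuously differentiable
    (g : EuclideanSpace ℝ (Fin d) → ℝ) (hgconv : ConvexOn ℝ Set.univ g)
    (g' : EuclideanSpace ℝ (Fin d) → EuclideanSpace ℝ (Fin d))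
    (hg' : ∀ x, HasGradientAt g (g' x) x) (hg'c : Continuous g')
    -- the admissible pair (x*, u*)
    (ustar : ℝ → U) (humeas : Measurable ustar)
    (xstar : ℝ → EuclideanSpace ℝ (Fin d))
    (hx : ∀ t ∈ Set.Icc 0 T, HasDerivAt xstar (btilde t (xstar t) (ustar t)) t)
    (hxC1 : ContinuousOn (fun t => btilde t (xstar t) (ustar t)) (Set.Icc 0 T))
    (hx0 : xstar 0 = x₀)
    (hrint : IntervalIntegrable (fun t => rtilde t (xstar t) (ustar t)) volume 0 T)
    -- the C¹ Pontryagin costate p* with derivative p*'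
    (pstar pstar' : ℝ → EuclideanSpace ℝ (Fin d))
    (hp : ∀ t ∈ Set.Icc 0 T, HasDerivAt pstar (pstar' t) t)
    (hp'c : ContinuousOn pstar' (Set.Icc 0 T))
    (htrans : pstar T = g' (xstar T))
    (hmin : ∀ t ∈ Set.Icc 0 T,
      ⟪pstar t, btilde t (xstar t) (ustar t)⟫ + rtilde t (xstar t) (ustar t) =
        Hred t (xstar t) (pstar t))
    (hHint : IntervalIntegrable (fun t => Hred t (xstar t) (pstar t)) volume 0 T) :
    IsGreatest
      {v : ℝ | ∃ p p' : ℝ → EuclideanSpace ℝ (Fin d),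
        (∀ t ∈ Set.Icc 0 T, HasDerivAt p (p' t) t) ∧
        ContinuousOn p' (Set.Icc 0 T) ∧
        BddAbove (Set.range fun x : EuclideanSpace ℝ (Fin d) => ⟪x, p T⟫ - g x) ∧
        IntervalIntegrable (fun t => Hred t (xstar t) (p t)) volume 0 T ∧
        v = ⟪x₀, p 0⟫ - (⨆ x : EuclideanSpace ℝ (Fin d), (⟪x, p T⟫ - g x)) +
          ∫ t in (0:ℝ)..T, (Hred t (xstar t) (p t) + ⟪xstar t, p' t⟫)}
      ((∫ t in (0:ℝ)..T, rtilde t (xstar t) (ustar t)) + g (xstar T)) ∧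
    ⟪x₀, pstar 0⟫ - (⨆ x : EuclideanSpace ℝ (Fin d), (⟪x, pstar T⟫ - g x)) +
        (∫ t in (0:ℝ)..T, (Hred t (xstar t) (pstar t) + ⟪xstar t, pstar' t⟫)) =
      (∫ t in (0:ℝ)..T, rtilde t (xstar t) (ustar t)) + g (xstar T) := by
  have huIcc : Set.uIcc (0:ℝ) T = Set.Icc 0 T := Set.uIcc_of_le hT.le
  have hxc : ContinuousOn xstar (Set.Icc 0 T) :=
    fun t ht => (hx t ht).continuousAt.continuousWithinAt
  set b : ℝ → EuclideanSpace ℝ (Fin d) := fun t => btilde t (xstar t) (ustar t) with hb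
  -- boundedness of the conjugate at pstar T, and its value
  have hbddstar : ∀ x : EuclideanSpace ℝ (Fin d),
      ⟪x, pstar T⟫ - g x ≤ ⟪xstar T, pstar T⟫ - g (xstar T) := by
    intro x
    rw [htrans]
    exact grad_ineq_aux_s5 hgconv (hg' (xstar T)) x
  have hBstar : BddAbove
      (Set.range fun x : EuclideanSpace ℝ (Fin d) => ⟪x, pstar T⟫ - g x) := by
    refine ⟨⟪xstar T, pstar T⟫ - g (xstar T), ?_⟩
    rintro _ ⟨x, rfl⟩
    exact hbddstar x
  have hSstar : (⨆ x : EuclideanSpace ℝ (Fin d), (⟪x, pstar T⟫ - g x)) =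
      ⟪xstar T, pstar T⟫ - g (xstar T) :=
    le_antisymm (ciSup_le hbddstar)
      (le_ciSup hBstar (xstar T))
  -- FTC for pstar
  have I1star := ftc_inner_aux hT.le xstar b pstar pstar' hx hxC1 hp hp'c
  rw [hx0] at I1star
  -- equality of integrands for pstar
  have heqstar : Set.EqOn
      (fun t => Hred t (xstar t) (pstar t) + ⟪xstar t, pstar' t⟫)
      (fun t => rtilde t (xstar t) (ustar t) + (⟪xstar t, pstar' t⟫ + ⟪b t, pstar t⟫))
      (Set.uIcc (0:ℝ) T) := by
    intro t ht
    rw [huIcc] at ht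
    have h1 := hmin t ht
    have h2 : ⟪b t, pstar t⟫ = ⟪pstar t, b t⟫ := real_inner_comm _ _
    simp only [hb] at h1 h2 ⊢
    linarith
  have hIeqstar : (∫ t in (0:ℝ)..T, (Hred t (xstar t) (pstar t) + ⟪xstar t, pstar' t⟫)) =
      (∫ t in (0:ℝ)..T, rtilde t (xstar t) (ustar t)) +
        (⟪xstar T, pstar T⟫ - ⟪x₀, pstar 0⟫) := by
    rw [intervalIntegral.integral_congr heqstar, intervalIntegral.integral_add hrint, I1star]
    apply ContinuousOn.intervalIntegrable
    rw [huIcc]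
    exact ((hxc.inner hp'c).add (hxC1.inner
      (fun t ht => (hp t ht).continuousAt.continuousWithinAt)))
  have hattain : ⟪x₀, pstar 0⟫ -
      (⨆ x : EuclideanSpace ℝ (Fin d), (⟪x, pstar T⟫ - g x)) +
        (∫ t in (0:ℝ)..T, (Hred t (xstar t) (pstar t) + ⟪xstar t, pstar' t⟫)) =
      (∫ t in (0:ℝ)..T, rtilde t (xstar t) (ustar t)) + g (xstar T) := by
    rw [hSstar, hIeqstar]; ring
  refine ⟨⟨⟨pstar, pstar', hp, hp'c, hBstar, hHint, hattain.symm⟩, ?_⟩, hattain⟩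
  -- upper bound: weak duality for arbitrary admissible costate p
  rintro v ⟨p, p', hpd, hpc', hBdd, hHintp, rfl⟩
  have hpc : ContinuousOn p (Set.Icc 0 T) :=
    fun t ht => (hpd t ht).continuousAt.continuousWithinAt
  have I1 := ftc_inner_aux hT.le xstar b p p' hx hxC1 hpd hpc'
  rw [hx0] at I1
  have hcont2 : ContinuousOn (fun t => ⟪xstar t, p' t⟫ + ⟪b t, p t⟫) (Set.Icc 0 T) :=
    (hxc.inner hpc').add (hxC1.inner hpc)
  have hint1 : IntervalIntegrable
      (fun t => Hred t (xstar t) (p t) + ⟪xstar t, p' t⟫) volume 0 T := by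
    refine hHintp.add (ContinuousOn.intervalIntegrable ?_)
    rw [huIcc]; exact hxc.inner hpc'
  have hint2 : IntervalIntegrable
      (fun t => rtilde t (xstar t) (ustar t) + (⟪xstar t, p' t⟫ + ⟪b t, p t⟫))
      volume 0 T := by
    refine hrint.add (ContinuousOn.intervalIntegrable ?_)
    rw [huIcc]; exact hcont2
  have hptw : ∀ t ∈ Set.Icc (0:ℝ) T,
      Hred t (xstar t) (p t) + ⟪xstar t, p' t⟫ ≤
        rtilde t (xstar t) (ustar t) + (⟪xstar t, p' t⟫ + ⟪b t, p t⟫) := by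
    intro t ht
    have h1 : Hred t (xstar t) (p t) ≤ ⟪p t, b t⟫ + rtilde t (xstar t) (ustar t) := by
      rw [hHred]
      exact ciInf_le (hfin t (xstar t) (p t)) (ustar t)
    have h2 : ⟪b t, p t⟫ = ⟪p t, b t⟫ := real_inner_comm _ _
    linarith
  have hIle : (∫ t in (0:ℝ)..T, (Hred t (xstar t) (p t) + ⟪xstar t, p' t⟫)) ≤
      (∫ t in (0:ℝ)..T, rtilde t (xstar t) (ustar t)) +
        (⟪xstar T, p T⟫ - ⟪x₀, p 0⟫) := by
    calc (∫ t in (0:ℝ)..T, (Hred t (xstar t) (p t) + ⟪xstar t, p' t⟫)) ≤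
        ∫ t in (0:ℝ)..T, (rtilde t (xstar t) (ustar t) + (⟪xstar t, p' t⟫ + ⟪b t, p t⟫)) :=
          intervalIntegral.integral_mono_on hT.le hint1 hint2 hptw
      _ = (∫ t in (0:ℝ)..T, rtilde t (xstar t) (ustar t)) +
            (⟪xstar T, p T⟫ - ⟪x₀, p 0⟫) := by
          rw [intervalIntegral.integral_add hrint, I1]
          apply ContinuousOn.intervalIntegrable
          rw [huIcc]; exact hcont2
  have hS : ⟪xstar T, p T⟫ - g (xstar T) ≤
      (⨆ x : EuclideanSpace ℝ (Fin d), (⟪x, p T⟫ - g x)) :=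
    le_ciSup hBdd (xstar T)
  linarith
end

section
/- Let T > 0, d ∈ ℕ, let A ∈ ℝ^{d×d} be a symmetric positive semidefinite matrix, define g(x) = ½(xᵀAx + 1), and let γ_d denote the standard Gaussian measure on ℝ^d. Define V : [0,T) × ℝ^d → ℝ by V(t,x) = −ln ∫_{ℝ^d} exp(−g(x + √(2(T−t)) z)) dγ_d(z). Then V is continuously differentiable in t and twice continuously differentiable in x on (0,T) × ℝ^d and satisfies the Hamilton–Jacobi–Bellman equation ∂_t V(t,x) + Δ_x V(t,x) − |∇_x V(t,x)|² = 0 for all (t,x) ∈ (0,T) × ℝ^d, and V(t,x) → g(x) as t → T for every x ∈ ℝ^d. -/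
open MeasureTheory

/-- The standard Gaussian measure on `ℝ^d`, with density `(2π)^{-d/2} e^{-|z|²/2}`
with respect to Lebesgue measure. -/
noncomputable def stdGaussian (d : ℕ) : Measure (EuclideanSpace ℝ (Fin d)) :=
  volume.withDensity fun z =>
    ENNReal.ofReal ((2 * Real.pi) ^ (-(d : ℝ) / 2) * Real.exp (-‖z‖ ^ 2 / 2))

/-- The quadratic terminal cost `g(x) = ½(xᵀAx + 1)`. -/
noncomputable def quadCost {d : ℕ} (A : Matrix (Fin d) (Fin d) ℝ)
    (x : EuclideanSpace ℝ (Fin d)) : ℝ :=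
  ((∑ i : Fin d, ∑ j : Fin d, x i * A i j * x j) + 1) / 2

/-- Partial derivative of `f : ℝ^d → ℝ` at `x` in the `i`-th coordinate direction. -/
noncomputable def pd {d : ℕ} (i : Fin d) (f : EuclideanSpace ℝ (Fin d) → ℝ)
    (x : EuclideanSpace ℝ (Fin d)) : ℝ :=
  deriv (fun s : ℝ => f (x + s • EuclideanSpace.single i 1)) 0

section HJBAux
open Real Filter Matrix

lemma gauss1d {a : ℝ} (ha : 0 < a) (b c : ℝ) :
    ∫ x : ℝ, Real.exp (-(a * x ^ 2) + b * x + c)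
      = Real.sqrt (Real.pi / a) * Real.exp (c + b ^ 2 / (4 * a)) := by
  have h : ∀ x : ℝ, -(a * x ^ 2) + b * x + c
      = -(a * (x - b / (2 * a)) ^ 2) + (c + b ^ 2 / (4 * a)) := by
    intro x; field_simp; ring
  simp_rw [h, Real.exp_add]
  rw [integral_mul_const, integral_sub_right_eq_self (fun y => Real.exp (-(a * y ^ 2))) (b / (2*a))]
  rw [show (fun y : ℝ => Real.exp (-(a * y ^ 2))) = fun y : ℝ => Real.exp (-a * y ^ 2) by
    funext y; ring_nf, integral_gaussian]

lemma int1d {L : ℝ} (hL : 0 ≤ L) (c s : ℝ) :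
    ∫ y : ℝ, (2 * Real.pi) ^ (-(1 : ℝ) / 2)
        * Real.exp (-((L * (c + s * y) ^ 2 + y ^ 2) / 2))
      = (Real.sqrt (1 + L * s ^ 2))⁻¹ * Real.exp (-(L * c ^ 2 / (2 * (1 + L * s ^ 2)))) := by
  set D : ℝ := 1 + L * s ^ 2 with hD
  have hDpos : 0 < D := by positivity
  set a : ℝ := D / 2 with ha
  have hapos : 0 < a := by positivity
  have hexp : ∀ y : ℝ, -((L * (c + s * y) ^ 2 + y ^ 2) / 2)
      = -(a * y ^ 2) + (-(L * c * s)) * y + (-(L * c ^ 2 / 2)) := by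
    intro y; rw [ha, hD]; ring
  simp_rw [hexp]
  rw [MeasureTheory.integral_const_mul, gauss1d hapos]
  have h2pi : (0:ℝ) < 2 * Real.pi := by positivity
  have hc1 : (2 * Real.pi) ^ (-(1 : ℝ) / 2) * Real.sqrt (Real.pi / a) = (Real.sqrt D)⁻¹ := by
    rw [show (-(1:ℝ)/2) = -(1/2) by norm_num, Real.rpow_neg h2pi.le, ← Real.sqrt_eq_rpow]
    have key : Real.sqrt (Real.pi / a) * Real.sqrt D = Real.sqrt (2 * Real.pi) := by
      rw [← Real.sqrt_mul (by positivity)]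
      congr 1
      rw [ha]
      field_simp
    have hpa : Real.sqrt (Real.pi / a) ≠ 0 := by positivity
    have hsD : Real.sqrt D ≠ 0 := by positivity
    rw [← key]
    field_simp
  have hc2 : -(L * c ^ 2 / 2) + (-(L * c * s)) ^ 2 / (4 * a) = -(L * c ^ 2 / (2 * D)) := by
    rw [ha, hD]
    have : (1 + L * s ^ 2) ≠ 0 := by positivity
    field_simp
    ring
  rw [← mul_assoc, hc1, hc2]

lemma sum_sq_of_ortho {d : ℕ} (U : Matrix (Fin d) (Fin d) ℝ)
    (hU : ∀ j j', ∑ i, U i j * U i j' = if j = j' then 1 else 0) (a : Fin d → ℝ) :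
    ∑ i, (∑ j, a j * U i j)^2 = ∑ j, (a j)^2 := by
  have h1 : ∀ i : Fin d, (∑ j, a j * U i j)^2 = ∑ j, ∑ j', (a j * a j') * (U i j * U i j') := by
    intro i
    rw [sq, Finset.sum_mul_sum]
    exact Finset.sum_congr rfl fun j _ => Finset.sum_congr rfl fun j' _ => by ring
  simp_rw [h1]
  rw [Finset.sum_comm]
  have h2 : ∀ j : Fin d, ∑ i : Fin d, ∑ j', (a j * a j') * (U i j * U i j')
      = ∑ j', (a j * a j') * ∑ i, U i j * U i j' := by
    intro j
    rw [Finset.sum_comm]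
    exact Finset.sum_congr rfl fun j' _ => by rw [Finset.mul_sum]
  simp_rw [h2, hU]
  simp [sq]

noncomputable def rotEquiv {d : ℕ} (U : Matrix (Fin d) (Fin d) ℝ)
    (hcol : ∀ j j', ∑ i, U i j * U i j' = if j = j' then 1 else 0)
    (hrow : ∀ i i', ∑ k, U i k * U i' k = if i = i' then 1 else 0) :
    EuclideanSpace ℝ (Fin d) ≃ₗᵢ[ℝ] EuclideanSpace ℝ (Fin d) where
  toFun w := (WithLp.toLp 2 (fun i => ∑ k, U i k * w k) : EuclideanSpace ℝ (Fin d))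
  invFun w := (WithLp.toLp 2 (fun k => ∑ i, U i k * w i) : EuclideanSpace ℝ (Fin d))
  left_inv w := by
    ext k
    show ∑ i, U i k * (∑ m, U i m * w m) = w k
    simp_rw [Finset.mul_sum]
    rw [Finset.sum_comm]
    have : ∀ m : Fin d, ∑ i, U i k * (U i m * w m) = (if k = m then 1 else 0) * w m := by
      intro m
      rw [← hcol k m, Finset.sum_mul]
      exact Finset.sum_congr rfl fun i _ => by ring
    simp_rw [this, ite_mul, one_mul, zero_mul, Finset.sum_ite_eq, Finset.mem_univ, if_pos]
  right_inv w := by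
    ext i
    show ∑ k, U i k * (∑ m, U m k * w m) = w i
    simp_rw [Finset.mul_sum]
    rw [Finset.sum_comm]
    have : ∀ m : Fin d, ∑ k, U i k * (U m k * w m) = (if i = m then 1 else 0) * w m := by
      intro m
      rw [← hrow i m, Finset.sum_mul]
      exact Finset.sum_congr rfl fun k _ => by ring
    simp_rw [this, ite_mul, one_mul, zero_mul, Finset.sum_ite_eq, Finset.mem_univ, if_pos]
  map_add' x y := by
    ext i
    show ∑ k, U i k * (x k + y k) = (∑ k, U i k * x k) + ∑ k, U i k * y k
    rw [← Finset.sum_add_distrib]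
    exact Finset.sum_congr rfl fun k _ => by ring
  map_smul' r x := by
    ext i
    show ∑ k, U i k * (r * x k) = r * ∑ k, U i k * x k
    rw [Finset.mul_sum]
    exact Finset.sum_congr rfl fun k _ => by ring
  norm_map' w := by
    rw [EuclideanSpace.norm_eq, EuclideanSpace.norm_eq]
    congr 1
    have h3 : ∀ i : Fin d, ‖(∑ k, U i k * w k)‖ ^ 2 = (∑ k, w k * U i k) ^ 2 := by
      intro i; rw [Real.norm_eq_abs, sq_abs]; congr 1
      exact Finset.sum_congr rfl fun k _ => by ring
    show ∑ i, ‖(∑ k, U i k * w k)‖ ^ 2 = ∑ k, ‖w k‖ ^ 2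
    simp_rw [h3, Real.norm_eq_abs, sq_abs]
    exact sum_sq_of_ortho U hcol w

lemma rotEquiv_apply {d : ℕ} (U : Matrix (Fin d) (Fin d) ℝ) (hcol) (hrow)
    (w : EuclideanSpace ℝ (Fin d)) (i : Fin d) :
    rotEquiv U hcol hrow w i = ∑ k, U i k * w k := rfl

end HJBAux

section Gauss
open Real Filter

lemma rho_pos {d : ℕ} (z : EuclideanSpace ℝ (Fin d)) :
    0 < (2 * Real.pi) ^ (-(d : ℝ) / 2) * Real.exp (-‖z‖ ^ 2 / 2) :=
  mul_pos (Real.rpow_pos_of_pos (by positivity) _) (Real.exp_pos _)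

lemma integral_stdGaussian {d : ℕ} (g : EuclideanSpace ℝ (Fin d) → ℝ) :
    ∫ z, g z ∂(stdGaussian d)
      = ∫ z, ((2 * Real.pi) ^ (-(d : ℝ) / 2) * Real.exp (-‖z‖ ^ 2 / 2)) * g z := by
  have hmeas : AEMeasurable (fun z : EuclideanSpace ℝ (Fin d) =>
      ((2 * Real.pi) ^ (-(d : ℝ) / 2) * Real.exp (-‖z‖ ^ 2 / 2)).toNNReal) volume := by
    apply Measurable.aemeasurable
    apply Measurable.real_toNNReal
    exact (continuous_const.mul (((continuous_norm.pow 2).neg.div_const 2).rexp)).measurable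
  rw [show stdGaussian d = volume.withDensity (fun z =>
      ((((2 * Real.pi) ^ (-(d : ℝ) / 2) * Real.exp (-‖z‖ ^ 2 / 2)).toNNReal : NNReal)
        : ENNReal)) from rfl,
    integral_withDensity_eq_integral_smul₀ hmeas g]
  refine integral_congr_ae (Filter.Eventually.of_forall fun z => ?_)
  show _ • _ = _
  rw [NNReal.smul_def, Real.coe_toNNReal _ (rho_pos z).le]
  rfl

lemma integral_rot {d : ℕ} (e : EuclideanSpace ℝ (Fin d) ≃ₗᵢ[ℝ] EuclideanSpace ℝ (Fin d))
    (g : EuclideanSpace ℝ (Fin d) → ℝ) :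
    ∫ z, ((2 * Real.pi) ^ (-(d : ℝ) / 2) * Real.exp (-‖z‖ ^ 2 / 2)) * g z
      = ∫ w, ((2 * Real.pi) ^ (-(d : ℝ) / 2) * Real.exp (-‖w‖ ^ 2 / 2)) * g (e w) := by
  rw [← e.measurePreserving.integral_comp e.toHomeomorph.measurableEmbedding
    (fun z => ((2 * Real.pi) ^ (-(d : ℝ) / 2) * Real.exp (-‖z‖ ^ 2 / 2)) * g z)]
  simp_rw [e.norm_map]

lemma integral_euclidean_prod {d : ℕ} (f : Fin d → ℝ → ℝ) :
    ∫ z : EuclideanSpace ℝ (Fin d), ∏ k, f k (z k) = ∏ k, ∫ x : ℝ, f k x := by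
  rw [← MeasureTheory.integral_fintype_prod_eq_prod (ι := Fin d) f]
  exact (EuclideanSpace.volume_preserving_symm_measurableEquiv_toLp (Fin d)).integral_comp'
    (fun y => ∏ k, f k (y k))

end Gauss

set_option maxHeartbeats 2000000 in
/-- The explicit Hopf–Cole solution of the HJB equation for the linear-quadratic
example: `V(t,x) = −ln ∫ exp(−g(x + √(2(T−t)) z)) dγ_d(z)` is C¹ in `t` and C² in `x`
on `(0,T) × ℝ^d`, satisfies `∂ₜV + ΔₓV − |∇ₓV|² = 0` there, and `V(t,x) → g(x)` as
`t → T`. -/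
theorem stmt_11 {d : ℕ} (T : ℝ) (hT : 0 < T)
    (A : Matrix (Fin d) (Fin d) ℝ) (hAsymm : A.IsSymm) (hApsd : A.PosSemidef)
    (V : ℝ → EuclideanSpace ℝ (Fin d) → ℝ)
    (hV : ∀ t x, V t x = -Real.log
      (∫ z, Real.exp (-(quadCost A (x + Real.sqrt (2 * (T - t)) • z))) ∂(stdGaussian d))) :
    (∀ x, ContDiffOn ℝ 1 (fun t => V t x) (Set.Ioo 0 T)) ∧
    (∀ t ∈ Set.Ioo 0 T, ContDiff ℝ 2 (V t)) ∧
    (∀ t ∈ Set.Ioo 0 T, ∀ x,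
      deriv (fun s => V s x) t + ∑ i : Fin d, pd i (pd i (V t)) x
        - ∑ i : Fin d, (pd i (V t) x) ^ 2 = 0) ∧
    (∀ x, Filter.Tendsto (fun t => V t x) (nhdsWithin T (Set.Iio T))
      (nhds (quadCost A x))) := by
  classical
  have hHe : A.IsHermitian := hApsd.1
  set U : Matrix (Fin d) (Fin d) ℝ :=
    (Matrix.IsHermitian.eigenvectorUnitary hHe : Matrix (Fin d) (Fin d) ℝ) with hUdef
  set L : Fin d → ℝ := hHe.eigenvalues with hLdef
  have hLnn : ∀ k, 0 ≤ L k := fun k => hApsd.eigenvalues_nonneg k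
  have hmem := (Matrix.IsHermitian.eigenvectorUnitary hHe).2
  rw [Unitary.mem_iff] at hmem
  have hcol : ∀ j j', ∑ i, U i j * U i j' = if j = j' then 1 else 0 := by
    intro j j'
    have := congrFun (congrFun hmem.1 j) j'
    rw [Matrix.mul_apply, Matrix.one_apply] at this
    simpa only [Matrix.star_apply, star_trivial] using this
  have hrow : ∀ i i', ∑ k, U i k * U i' k = if i = i' then 1 else 0 := by
    intro i i'
    have := congrFun (congrFun hmem.2 i) i'
    rw [Matrix.mul_apply, Matrix.one_apply] at this
    simpa only [Matrix.star_apply, star_trivial] using this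
  have hAe : ∀ i j, A i j = ∑ k, U i k * L k * U j k := by
    intro i j
    have := congrFun (congrFun hHe.spectral_theorem i) j
    rw [Unitary.conjStarAlgAut_apply, Matrix.mul_apply] at this
    simpa [Matrix.mul_diagonal, Matrix.star_apply, hUdef] using this
  -- the coordinates in the eigenbasis
  set cf : Fin d → EuclideanSpace ℝ (Fin d) → ℝ := fun j x => ∑ i, x i * U i j with hcfdef
  have hquad : ∀ y : EuclideanSpace ℝ (Fin d),
      ∑ i, ∑ j, y i * A i j * y j = ∑ k, L k * (cf k y)^2 := by
    intro y
    have h1 : ∀ i j : Fin d, y i * A i j * y j = ∑ k, (y i * U i k) * L k * (y j * U j k) := by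
      intro i j
      rw [hAe i j, Finset.mul_sum, Finset.sum_mul]
      exact Finset.sum_congr rfl fun k _ => by ring
    simp_rw [h1]
    have h2 : ∀ i, ∑ j, ∑ k, (y i * U i k) * L k * (y j * U j k)
        = ∑ k, (y i * U i k) * L k * (cf k y) := by
      intro i
      rw [Finset.sum_comm]
      refine Finset.sum_congr rfl fun k _ => ?_
      rw [hcfdef]
      simp only
      rw [Finset.mul_sum]
    simp_rw [h2]
    rw [Finset.sum_comm]
    refine Finset.sum_congr rfl fun k _ => ?_
    have h3 : ∑ i, (y i * U i k) * L k * (cf k y) = (∑ i, y i * U i k) * (L k * cf k y) := by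
      rw [Finset.sum_mul]
      exact Finset.sum_congr rfl fun i _ => by ring
    rw [h3]
    have : (∑ i, y i * U i k) = cf k y := rfl
    rw [this]; ring
  set rot := rotEquiv U hcol hrow with hrotdef
  set Df : Fin d → ℝ → ℝ := fun j t => 1 + 2 * (T - t) * L j with hDfdef
  set W : ℝ → EuclideanSpace ℝ (Fin d) → ℝ := fun t x =>
    1/2 + (∑ j, Real.log (Df j t))/2 + (∑ j, L j * (cf j x)^2 / Df j t)/2 with hWdef
  have hDone : ∀ j t, t ≤ T → 1 ≤ Df j t := by
    intro j t ht
    simp only [hDfdef]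
    nlinarith [hLnn j]
  have hDpos : ∀ j t, t ≤ T → 0 < Df j t := fun j t ht => lt_of_lt_of_le one_pos (hDone j t ht)
  have hnormsq : ∀ w : EuclideanSpace ℝ (Fin d), ‖w‖^2 = ∑ i, (w i)^2 := by
    intro w
    rw [EuclideanSpace.norm_eq, Real.sq_sqrt (by positivity)]
    exact Finset.sum_congr rfl fun i _ => by rw [Real.norm_eq_abs, sq_abs]
  have hpow : (2*Real.pi : ℝ) ^ (-(d:ℝ)/2) = ∏ _k : Fin d, (2*Real.pi : ℝ) ^ (-(1:ℝ)/2) := by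
    rw [Finset.prod_const, Finset.card_univ, Fintype.card_fin,
      ← Real.rpow_natCast ((2*Real.pi) ^ (-(1:ℝ)/2)) d, ← Real.rpow_mul (by positivity)]
    congr 1
    push_cast
    ring
  have key : ∀ t, t ≤ T → ∀ x, V t x = W t x := by
    intro t ht x
    set s := Real.sqrt (2 * (T - t)) with hsdef
    have hs2 : s ^ 2 = 2 * (T - t) := Real.sq_sqrt (by linarith)
    have hcfrot : ∀ (j : Fin d) (w : EuclideanSpace ℝ (Fin d)),
        cf j (x + s • rot w) = cf j x + s * w j := by
      intro j w
      have happ : ∀ i, (x + s • rot w) i = x i + s * (∑ k, U i k * w k) := by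
        intro i
        rw [PiLp.add_apply, PiLp.smul_apply, smul_eq_mul, hrotdef, rotEquiv_apply]
      show ∑ i, (x + s • rot w) i * U i j = (∑ i, x i * U i j) + s * w j
      simp_rw [happ, add_mul]
      rw [Finset.sum_add_distrib]
      congr 1
      have h4 : ∀ i, s * (∑ k, U i k * w k) * U i j = s * ∑ k, w k * (U i k * U i j) := by
        intro i
        rw [Finset.mul_sum Finset.univ (fun k => w k * (U i k * U i j)) s,
          mul_assoc, Finset.sum_mul, Finset.mul_sum]
        exact Finset.sum_congr rfl fun k _ => by ring
      simp_rw [h4]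
      rw [← Finset.mul_sum, Finset.sum_comm]
      have h5 : ∀ k, ∑ i, w k * (U i k * U i j) = w k * (if k = j then 1 else 0) := by
        intro k
        rw [← Finset.mul_sum, hcol k j]
      simp_rw [h5]
      simp [Finset.sum_ite_eq]
    set fk : Fin d → ℝ → ℝ := fun k y => (2*Real.pi) ^ (-(1:ℝ)/2)
      * Real.exp (-((L k * (cf k x + s*y)^2 + y^2)/2)) with hfkdef
    have hptwise : ∀ w : EuclideanSpace ℝ (Fin d),
        ((2 * Real.pi) ^ (-(d : ℝ) / 2) * Real.exp (-‖w‖ ^ 2 / 2)) *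
          Real.exp (-(quadCost A (x + s • rot w)))
        = Real.exp (-(1/2) : ℝ) * ∏ k, fk k (w k) := by
      intro w
      have hq : quadCost A (x + s • rot w) = ((∑ k, L k * (cf k x + s * w k)^2) + 1)/2 := by
        rw [quadCost, hquad]
        simp_rw [hcfrot]
      rw [hq, hnormsq]
      have hRHS : Real.exp (-(1/2) : ℝ) * ∏ k, fk k (w k)
          = (∏ _k : Fin d, (2*Real.pi : ℝ) ^ (-(1:ℝ)/2)) *
            (Real.exp (-(1/2) : ℝ) * Real.exp (∑ k, -((L k * (cf k x + s*(w k))^2 + (w k)^2)/2))) := by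
        simp only [hfkdef]
        rw [Finset.prod_mul_distrib, ← Real.exp_sum]
        ring
      rw [hRHS, ← hpow, ← Real.exp_add]
      rw [mul_assoc, ← Real.exp_add]
      congr 2
      have hsplit : ∑ k, -((L k * (cf k x + s*(w k))^2 + (w k)^2)/2)
          = -(∑ k, L k * (cf k x + s*(w k))^2)/2 + -(∑ k, (w k)^2)/2 := by
        calc ∑ k, -((L k * (cf k x + s*(w k))^2 + (w k)^2)/2)
            = ∑ k, ((-(L k * (cf k x + s*(w k))^2))/2 + (-((w k)^2))/2) :=
              Finset.sum_congr rfl fun k _ => by ring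
          _ = (∑ k, (-(L k * (cf k x + s*(w k))^2))/2) + ∑ k, (-((w k)^2))/2 :=
              Finset.sum_add_distrib
          _ = _ := by
              rw [← Finset.sum_div, ← Finset.sum_div, ← Finset.sum_neg_distrib,
                ← Finset.sum_neg_distrib]
      rw [hsplit]
      ring
    have hu : (∫ z, Real.exp (-(quadCost A (x + s • z))) ∂(stdGaussian d))
        = Real.exp (-(1/2) : ℝ) * ∏ k, ((Real.sqrt (Df k t))⁻¹
            * Real.exp (-(L k * (cf k x)^2 / (2 * Df k t)))) := by
      rw [integral_stdGaussian, integral_rot rot]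
      simp_rw [hptwise]
      rw [MeasureTheory.integral_const_mul, integral_euclidean_prod]
      congr 1
      refine Finset.prod_congr rfl fun k _ => ?_
      have hint := int1d (hLnn k) (cf k x) s
      have hDk : 1 + L k * s ^ 2 = Df k t := by
        rw [hs2]
        simp only [hDfdef]
        ring
      rw [hfkdef]
      simp only
      rw [hint, hDk]
    have hWexp : Real.exp (-(W t x)) = Real.exp (-(1/2) : ℝ) * ∏ k, ((Real.sqrt (Df k t))⁻¹
        * Real.exp (-(L k * (cf k x)^2 / (2 * Df k t)))) := by
      have hfac : ∀ k : Fin d, (Real.sqrt (Df k t))⁻¹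
          * Real.exp (-(L k * (cf k x)^2 / (2 * Df k t)))
          = Real.exp (-(Real.log (Df k t)/2) + -(L k * (cf k x)^2 / Df k t / 2)) := by
        intro k
        rw [Real.exp_add]
        congr 1
        · rw [← Real.log_sqrt (hDpos k t ht).le, ← Real.log_inv,
            Real.exp_log (inv_pos.mpr (Real.sqrt_pos.mpr (hDpos k t ht)))]
        · congr 1
          rw [div_div, mul_comm (Df k t) 2]
      simp_rw [hfac]
      rw [← Real.exp_sum, ← Real.exp_add]
      congr 1
      simp only [hWdef]
      have hsp : ∑ k, (-(Real.log (Df k t)/2) + -(L k * (cf k x)^2 / Df k t / 2))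
          = -(∑ k, Real.log (Df k t))/2 + -(∑ k, L k * (cf k x)^2 / Df k t)/2 := by
        calc ∑ k, (-(Real.log (Df k t)/2) + -(L k * (cf k x)^2 / Df k t / 2))
            = ∑ k, ((-(Real.log (Df k t)))/2 + (-(L k * (cf k x)^2 / Df k t))/2) :=
              Finset.sum_congr rfl fun k _ => by ring
          _ = (∑ k, (-(Real.log (Df k t)))/2) + ∑ k, (-(L k * (cf k x)^2 / Df k t))/2 :=
              Finset.sum_add_distrib
          _ = _ := by
              rw [← Finset.sum_div, ← Finset.sum_div, ← Finset.sum_neg_distrib,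
                ← Finset.sum_neg_distrib]
      rw [hsp]
      ring
    rw [hV t x]
    show -Real.log (∫ z, Real.exp (-(quadCost A (x + s • z))) ∂(stdGaussian d)) = W t x
    rw [hu, ← hWexp, Real.log_exp, neg_neg]
  -- now the four claims
  have hDfC : ∀ j : Fin d, ContDiff ℝ 2 (fun t : ℝ => Df j t) := by
    intro j
    simp only [hDfdef]
    exact contDiff_const.add (((contDiff_const.sub contDiff_id).const_smul (2:ℝ)).mul contDiff_const)
  have hcfC : ∀ j : Fin d, ContDiff ℝ 2 (cf j) := by
    intro j
    apply ContDiff.sum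
    intro i _
    exact (EuclideanSpace.proj (𝕜 := ℝ) i).contDiff.mul contDiff_const
  refine ⟨?_, ?_, ?_, ?_⟩
  · -- C¹ in t
    intro x
    refine ContDiffOn.congr ?_ (fun t ht => key t ht.2.le x)
    simp only [hWdef]
    apply ContDiffOn.add
    apply ContDiffOn.add contDiffOn_const
    · apply ContDiffOn.div_const
      apply ContDiffOn.sum
      intro j _
      refine ContDiffOn.log ((hDfC j).contDiffOn.of_le (by norm_num)) ?_
      exact fun t ht => (hDpos j t ht.2.le).ne'
    · apply ContDiffOn.div_const
      apply ContDiffOn.sum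
      intro j _
      refine ContDiffOn.div contDiffOn_const ((hDfC j).contDiffOn.of_le (by norm_num)) ?_
      exact fun t ht => (hDpos j t ht.2.le).ne'
  · -- C² in x
    intro t ht
    have hVW : V t = W t := funext (key t ht.2.le)
    rw [hVW]
    simp only [hWdef]
    apply ContDiff.add
    apply ContDiff.add contDiff_const contDiff_const
    apply ContDiff.div_const
    apply ContDiff.sum
    intro j _
    exact ((contDiff_const.mul ((hcfC j).pow 2)).div_const (Df j t))
  · -- the HJB equation
    intro t ht x
    have htT : t ≤ T := ht.2.le
    have hVW : V t = W t := funext (key t htT)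
    have hDne : ∀ j, Df j t ≠ 0 := fun j => (hDpos j t htT).ne'
    have hcfline : ∀ (j : Fin d) (y : EuclideanSpace ℝ (Fin d)) (r : ℝ) (i : Fin d),
        cf j (y + r • EuclideanSpace.single i 1) = cf j y + r * U i j := by
      intro j y r i
      have happ : ∀ m, (y + r • EuclideanSpace.single i (1:ℝ)) m
          = y m + r * (if m = i then 1 else 0) := by
        intro m
        rw [PiLp.add_apply, PiLp.smul_apply, smul_eq_mul, EuclideanSpace.single_apply]
      show ∑ m, (y + r • EuclideanSpace.single i (1:ℝ)) m * U m j = (∑ m, y m * U m j) + r * U i j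
      simp_rw [happ, add_mul]
      rw [Finset.sum_add_distrib]
      congr 1
      have h6 : ∀ m, r * (if m = i then 1 else 0) * U m j
          = if m = i then r * U m j else 0 := by
        intro m
        by_cases h : m = i <;> simp [h]
      simp_rw [h6]
      rw [Finset.sum_ite_eq' Finset.univ i (fun m => r * U m j)]
      simp
    have hpdW : ∀ (i : Fin d) (y : EuclideanSpace ℝ (Fin d)),
        pd i (W t) y = ∑ j, L j * cf j y * U i j / Df j t := by
      intro i y
      have hterm : ∀ j : Fin d, HasDerivAt
          (fun r : ℝ => L j * (cf j (y + r • EuclideanSpace.single i 1))^2 / Df j t)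
          (L j * cf j y * U i j / Df j t * 2) 0 := by
        intro j
        have h0 : (fun r : ℝ => L j * (cf j (y + r • EuclideanSpace.single i 1))^2 / Df j t)
            = fun r : ℝ => L j * (cf j y + r * U i j)^2 / Df j t := by
          funext r; rw [hcfline]
        rw [h0]
        have hlin : HasDerivAt (fun r : ℝ => cf j y + r * U i j) (U i j) 0 := by
          simpa using ((hasDerivAt_id (0:ℝ)).mul_const (U i j)).const_add (cf j y)
        have := ((hlin.pow 2).const_mul (L j)).div_const (Df j t)
        refine this.congr_deriv (Eq.symm ?_)
        push_cast
        ring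
      have hW' : HasDerivAt (fun r : ℝ => W t (y + r • EuclideanSpace.single i 1))
          ((∑ j, L j * cf j y * U i j / Df j t * 2)/2) 0 := by
        have hsum := HasDerivAt.fun_sum (fun j (_ : j ∈ Finset.univ) => hterm j)
        have heq : (fun r : ℝ => W t (y + r • EuclideanSpace.single i 1))
            = fun r => (1/2 + (∑ j, Real.log (Df j t))/2)
              + (∑ j, L j * (cf j (y + r • EuclideanSpace.single i 1))^2 / Df j t)/2 := by
          funext r
          simp only [hWdef]
        rw [heq]
        exact (hsum.div_const 2).const_add _
      rw [pd, hW'.deriv, Finset.sum_div]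
      exact Finset.sum_congr rfl fun j _ => by ring
    have hpdW2 : ∀ (i : Fin d),
        pd i (pd i (W t)) x = ∑ j, L j * (U i j)^2 / Df j t := by
      intro i
      have h7 : pd i (W t) = fun y => ∑ j, L j * cf j y * U i j / Df j t := funext (hpdW i)
      rw [h7, pd]
      have hterm : ∀ j : Fin d, HasDerivAt
          (fun r : ℝ => L j * cf j (x + r • EuclideanSpace.single i 1) * U i j / Df j t)
          (L j * (U i j)^2 / Df j t) 0 := by
        intro j
        have h0 : (fun r : ℝ => L j * cf j (x + r • EuclideanSpace.single i 1) * U i j / Df j t)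
            = fun r : ℝ => L j * (cf j x + r * U i j) * U i j / Df j t := by
          funext r; rw [hcfline]
        rw [h0]
        have hlin : HasDerivAt (fun r : ℝ => cf j x + r * U i j) (U i j) 0 := by
          simpa using ((hasDerivAt_id (0:ℝ)).mul_const (U i j)).const_add (cf j x)
        have := ((hlin.const_mul (L j)).mul_const (U i j)).div_const (Df j t)
        refine this.congr_deriv (Eq.symm ?_)
        push_cast
        ring
      have hsum := HasDerivAt.fun_sum (fun j (_ : j ∈ Finset.univ) => hterm j)
      rw [hsum.deriv]
    have hev : (fun s => V s x) =ᶠ[nhds t] (fun s => W s x) := by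
      filter_upwards [Iio_mem_nhds ht.2] with s hs
      exact key s (le_of_lt hs) x
    have hDder : ∀ j, HasDerivAt (fun u : ℝ => Df j u) (-(2 * L j)) t := by
      intro j
      simp only [hDfdef]
      have := ((((hasDerivAt_id t).const_sub T).const_mul 2).mul_const (L j)).const_add 1
      refine this.congr_deriv (Eq.symm ?_)
      ring
    have hWt' : HasDerivAt (fun u => W u x)
        (∑ j, (-(L j)/Df j t + (L j)^2*(cf j x)^2/(Df j t)^2)) t := by
      have hlog : ∀ j, HasDerivAt (fun u => Real.log (Df j u)) (-(2*L j)/Df j t) t :=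
        fun j => (hDder j).log (hDne j)
      have hinv : ∀ j, HasDerivAt (fun u => L j * (cf j x)^2 / Df j u)
          (L j * (cf j x)^2 * ((2 * L j)/(Df j t)^2)) t := by
        intro j
        have h1 : HasDerivAt (fun u => (Df j u)⁻¹) (-(-(2*L j))/(Df j t)^2) t :=
          (hDder j).inv (hDne j)
        have h2 := h1.const_mul (L j * (cf j x)^2)
        have h3 : (fun u => L j * (cf j x)^2 / Df j u)
            = fun u => L j * (cf j x)^2 * (Df j u)⁻¹ := by
          funext u; rw [div_eq_mul_inv]
        rw [h3]
        refine h2.congr_deriv (Eq.symm ?_)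
        ring
      have hs1 := HasDerivAt.fun_sum (fun j (_ : j ∈ Finset.univ) => hlog j)
      have hs2 := HasDerivAt.fun_sum (fun j (_ : j ∈ Finset.univ) => hinv j)
      have heq : (fun u => W u x) = fun u =>
        (1/2 : ℝ) + (∑ j, Real.log (Df j u))/2 + (∑ j, L j * (cf j x)^2 / Df j u)/2 := by
        funext u
        simp only [hWdef]
      rw [heq]
      have := ((hs1.div_const 2).const_add (1/2 : ℝ)).add (hs2.div_const 2)
      refine this.congr_deriv (Eq.symm ?_)
      rw [Finset.sum_div, Finset.sum_div, ← Finset.sum_add_distrib]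
      refine Finset.sum_congr rfl fun j _ => ?_
      have := hDne j
      field_simp
    rw [hev.deriv_eq, hWt'.deriv, hVW]
    simp_rw [hpdW2, fun i => hpdW i x]
    have h2nd : ∑ i, ∑ j, L j * (U i j)^2/Df j t = ∑ j, L j / Df j t := by
      rw [Finset.sum_comm]
      refine Finset.sum_congr rfl fun j _ => ?_
      have h8 : ∑ i, L j * (U i j)^2 / Df j t = (∑ i, U i j * U i j) * (L j / Df j t) := by
        rw [Finset.sum_mul]
        exact Finset.sum_congr rfl fun i _ => by ring
      rw [h8, hcol j j, if_pos rfl, one_mul]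
    have h3rd : ∑ i, (∑ j, L j * cf j x * U i j / Df j t)^2
        = ∑ j, (L j * cf j x / Df j t)^2 := by
      have h9 := sum_sq_of_ortho U hcol (fun j => L j * cf j x / Df j t)
      rw [← h9]
      refine Finset.sum_congr rfl fun i _ => ?_
      congr 1
      exact Finset.sum_congr rfl fun j _ => by ring
    rw [h2nd, h3rd, ← Finset.sum_add_distrib, ← Finset.sum_sub_distrib]
    rw [Finset.sum_eq_zero]
    intro j _
    have := hDne j
    field_simp
    ring
  · -- the limit as t → T
    intro x
    have hDT : ∀ j : Fin d, Df j T = 1 := by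
      intro j
      simp only [hDfdef]
      ring
    have hcont : ContinuousAt (fun t => W t x) T := by
      simp only [hWdef]
      have hDcont : ∀ j : Fin d, ContinuousAt (fun t : ℝ => Df j t) T :=
        fun j => ((hDfC j).continuous).continuousAt
      apply ContinuousAt.add
      apply ContinuousAt.add continuousAt_const
      · apply ContinuousAt.div_const
        refine tendsto_finset_sum _ fun j _ => ?_
        refine ContinuousAt.log (hDcont j) ?_
        rw [hDT j]; norm_num
      · apply ContinuousAt.div_const
        refine tendsto_finset_sum _ fun j _ => ?_
        refine ContinuousAt.div continuousAt_const (hDcont j) ?_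
        rw [hDT j]; norm_num
    have hWT : W T x = quadCost A x := by
      simp only [hWdef]
      rw [quadCost, hquad]
      have h10 : ∀ j : Fin d, Real.log (Df j T) = 0 := by
        intro j; rw [hDT j, Real.log_one]
      have h11 : ∀ j : Fin d, L j * (cf j x)^2 / Df j T = L j * (cf j x)^2 := by
        intro j; rw [hDT j, div_one]
      simp_rw [h10, h11]
      simp
      ring
    have h1 : Filter.Tendsto (fun t => W t x) (nhdsWithin T (Set.Iio T))
        (nhds (quadCost A x)) := by
      rw [← hWT]
      exact hcont.continuousWithinAt.tendsto
    refine Filter.Tendsto.congr' ?_ h1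
    filter_upwards [self_mem_nhdsWithin] with t ht
    exact (key t (le_of_lt ht) x).symm
end
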